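/- For every constant K ≥ 1 there exists a constant C = C(K) > 0 with the following property. Let W_1(0), …, W_L(0) be weight matrices of a depth-L width-m linear network satisfying ‖W_{b:a}(0)‖ ≤ K·√L·m^{(b−a+1)/2} for all 1 < a ≤ b < L and σ_max(W_{L:a}(0)) ≤ 1.2·m^{(L−a+1)/2} for all 1 < a ≤ L. Let R > 0, let Δ_1, …, Δ_L be matrices of matching shapes with ‖Δ_i‖_F ≤ R for every i, and set W_i = W_i(0) + Δ_i. If m ≥ C·L³·R², then for all 1 < i ≤ L, ‖W_{L:i} − W_{L:i}(0)‖ ≤ 0.05·m^{(L−i+1)/2}. -/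

import Mathlib

open MeasureTheory ProbabilityTheory Matrix
open scoped BigOperators ENNReal

noncomputable section

/-- `W_j * W_{j-1} * ⋯ * W_i` for a family of square matrices (identity if `j < i`). -/
def midProd {m : ℕ} (W : ℕ → Matrix (Fin m) (Fin m) ℝ) (i j : ℕ) :
    Matrix (Fin m) (Fin m) ℝ :=
  (((List.range' i (j + 1 - i)).reverse).map W).prod

/-- Euclidean norm of a vector. -/
def enorm' {a : ℕ} (v : Fin a → ℝ) : ℝ := Real.sqrt (∑ i, v i ^ 2)

/-- Largest singular value (spectral norm): supremum of `‖A v‖` over unit vectors `v`. -/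
def smax {a b : ℕ} (A : Matrix (Fin a) (Fin b) ℝ) : ℝ :=
  ⨆ v : {v : Fin b → ℝ // ∑ j, v j ^ 2 = 1}, enorm' (A.mulVec v.1)

/-- Smallest singular value: infimum of `‖A v‖` over unit vectors `v`. -/
def smin {a b : ℕ} (A : Matrix (Fin a) (Fin b) ℝ) : ℝ :=
  ⨅ v : {v : Fin b → ℝ // ∑ j, v j ^ 2 = 1}, enorm' (A.mulVec v.1)

/-- Squared Frobenius norm of a matrix. -/
def frobSq {a b : ℕ} (A : Matrix (Fin a) (Fin b) ℝ) : ℝ := ∑ i, ∑ j, A i j ^ 2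

/-- Frobenius norm of a matrix. -/
def frob {a b : ℕ} (A : Matrix (Fin a) (Fin b) ℝ) : ℝ := Real.sqrt (frobSq A)

/-- Index type for all the entries of the weight matrices
`W_1 ∈ ℝ^{m×din}`, `W_2, …, W_{L-1} ∈ ℝ^{m×m}`, `W_L ∈ ℝ^{dout×m}`. -/
def InitIdx (L m din dout : ℕ) : Type :=
  (Fin m × Fin din) ⊕ (({k : ℕ // 2 ≤ k ∧ k ≤ L - 1}) × (Fin m × Fin m)) ⊕ (Fin dout × Fin m)

/-- The family of all entries of the weight matrices. -/
def initEntry {Ω : Type*} (L m din dout : ℕ)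
    (W1 : Ω → Matrix (Fin m) (Fin din) ℝ)
    (Wmid : ℕ → Ω → Matrix (Fin m) (Fin m) ℝ)
    (WL : Ω → Matrix (Fin dout) (Fin m) ℝ) :
    InitIdx L m din dout → Ω → ℝ :=
  fun idx ω =>
    match idx with
    | Sum.inl p => W1 ω p.1 p.2
    | Sum.inr (Sum.inl p) => Wmid p.1.1 ω p.2.1 p.2.2
    | Sum.inr (Sum.inr p) => WL ω p.1 p.2

/-! Write `V_i = W_{L:i}` and `V⁰_i = W_{L:i}(0)`. Telescoping the product gives
`V_i - V⁰_i = Δ_L W_{L-1:i}(0) + ∑_{i ≤ j < L} V_{j+1} Δ_j W_{j-1:i}(0)`.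
Arguing by downward induction on `i`, every `V_{j+1}` with `j ≥ i` already satisfies
`‖V_{j+1}‖ ≤ (1.2 + 0.05) m^{(L-j)/2}`, so each of the at most `L` terms is at most
`1.25 K √L R m^{(L-i)/2}`, and the whole sum is at most `0.05 m^{(L-i+1)/2}` as soon as
`√m ≥ 25 K L^{3/2} R`, i.e. for `C = 625 K²`. -/

open scoped Matrix.Norms.L2Operator

lemma rpow_sub_add_one_div_two_eq_sqrt_pow {x : ℝ} (hx : 0 ≤ x) {a b : ℕ} (h : a ≤ b + 1) :
    x ^ (((b : ℝ) - a + 1) / 2) = √x ^ (b + 1 - a) := by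
  rw [Real.sqrt_eq_rpow, ← Real.rpow_natCast, ← Real.rpow_mul hx, Nat.cast_sub h]
  push_cast
  ring_nf

section SpectralNorm

variable {a b : ℕ}

lemma enorm'_eq_norm_toLp (v : Fin a → ℝ) : enorm' v = ‖WithLp.toLp 2 v‖ := by
  simp [enorm', EuclideanSpace.norm_eq, sq_abs]

lemma sum_sq_eq_one_iff_norm_toLp (v : Fin a → ℝ) : ∑ j, v j ^ 2 = 1 ↔ ‖WithLp.toLp 2 v‖ = 1 := by
  rw [← enorm'_eq_norm_toLp, enorm', Real.sqrt_eq_one]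

lemma smax_eq_l2_opNorm (A : Matrix (Fin a) (Fin b) ℝ) : smax A = ‖A‖ := by
  rw [Matrix.l2_opNorm_def, ← ContinuousLinearMap.sSup_sphere_eq_norm, smax, iSup]
  congr 1
  ext r
  constructor
  · rintro ⟨v, rfl⟩
    exact ⟨WithLp.toLp 2 v.1, by simpa [sum_sq_eq_one_iff_norm_toLp] using v.2,
      (enorm'_eq_norm_toLp _).symm⟩
  · rintro ⟨x, hx, rfl⟩
    exact ⟨⟨x.ofLp, by simpa [sum_sq_eq_one_iff_norm_toLp] using hx⟩, enorm'_eq_norm_toLp _⟩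

lemma l2_opNorm_le_frob (A : Matrix (Fin a) (Fin b) ℝ) : ‖A‖ ≤ frob A := by
  rw [Matrix.l2_opNorm_def]
  refine ContinuousLinearMap.opNorm_le_bound _ (Real.sqrt_nonneg _) fun x => ?_
  change ‖WithLp.toLp 2 (A *ᵥ x.ofLp)‖ ≤ frob A * ‖WithLp.toLp 2 x.ofLp‖
  rw [← enorm'_eq_norm_toLp, ← enorm'_eq_norm_toLp, enorm', enorm', frob, frobSq,
    ← Real.sqrt_mul (by positivity), Finset.sum_mul]
  refine Real.sqrt_le_sqrt (Finset.sum_le_sum fun i _ => ?_)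
  exact Finset.sum_mul_sq_le_sq_mul_sq Finset.univ (A i) x.ofLp

lemma l2_opNorm_one_le : ‖(1 : Matrix (Fin a) (Fin a) ℝ)‖ ≤ 1 := by
  rw [← Matrix.l2_opNorm_toEuclideanCLM, map_one]
  exact ContinuousLinearMap.norm_id_le

end SpectralNorm

section MidProd

variable {m : ℕ}

lemma midProd_of_lt (W : ℕ → Matrix (Fin m) (Fin m) ℝ) {i j : ℕ} (h : j < i) :
    midProd W i j = 1 := by
  simp [midProd, Nat.sub_eq_zero_of_le (Nat.succ_le_of_lt h)]

lemma midProd_eq_midProd_succ_mul (W : ℕ → Matrix (Fin m) (Fin m) ℝ) {i j : ℕ} (h : i ≤ j) :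
    midProd W i j = midProd W (i + 1) j * W i := by
  rw [midProd, midProd, show j + 1 - i = j + 1 - (i + 1) + 1 by omega, List.range'_succ]
  simp

lemma midProd_sub_midProd (A B : ℕ → Matrix (Fin m) (Fin m) ℝ) {i n : ℕ} (hi : 1 ≤ i)
    (hin : i ≤ n + 1) :
    midProd B i n - midProd A i n =
      ∑ j ∈ Finset.Ico i (n + 1), midProd B (j + 1) n * (B j - A j) * midProd A i (j - 1) := by
  induction h : n + 1 - i generalizing i with
  | zero =>
    obtain rfl : i = n + 1 := by omega
    simp [midProd_of_lt]
  | succ k ih =>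
    have hlt : i < n + 1 := by omega
    have hA : ∀ j ∈ Finset.Ico (i + 1) (n + 1),
        midProd B (j + 1) n * (B j - A j) * midProd A (i + 1) (j - 1) * A i =
          midProd B (j + 1) n * (B j - A j) * midProd A i (j - 1) := fun j hj => by
      have hj' := Finset.mem_Ico.mp hj
      rw [midProd_eq_midProd_succ_mul A (show i ≤ j - 1 by omega), Matrix.mul_assoc]
    rw [Finset.sum_eq_sum_Ico_succ_bot hlt, ← Finset.sum_congr rfl hA, ← Finset.sum_mul,
      ← ih (by omega) (by omega) (by omega), midProd_eq_midProd_succ_mul B (by omega),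
      midProd_eq_midProd_succ_mul A (by omega), midProd_of_lt A (show i - 1 < i by omega)]
    noncomm_ring

end MidProd

section Perturbation

variable {d m L : ℕ} {T₀ ΔT : Matrix (Fin d) (Fin m) ℝ} {W₀ Δ : ℕ → Matrix (Fin m) (Fin m) ℝ}
  {κ s R : ℝ}

lemma add_mul_midProd_add_sub {i : ℕ} (hi : 1 ≤ i) (hiL : i ≤ L) :
    (T₀ + ΔT) * midProd (fun k => W₀ k + Δ k) i (L - 1) - T₀ * midProd W₀ i (L - 1) =
      ΔT * midProd W₀ i (L - 1) + ∑ j ∈ Finset.Ico i L,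
        (T₀ + ΔT) * midProd (fun k => W₀ k + Δ k) (j + 1) (L - 1) * Δ j * midProd W₀ i (j - 1) := by
  have hsub := midProd_sub_midProd W₀ (fun k => W₀ k + Δ k) hi (show i ≤ L - 1 + 1 by omega)
  simp only [add_sub_cancel_left, Nat.sub_add_cancel (hi.trans hiL)] at hsub
  simp only [Matrix.mul_assoc] at hsub ⊢
  rw [← Matrix.mul_sum, ← hsub, Matrix.mul_sub, Matrix.add_mul, Matrix.add_mul]
  abel

lemma norm_midProd_le_of_le_succ (hκ : 1 ≤ κ)
    (hW₀ : ∀ a b : ℕ, 1 < a → a ≤ b → b < L → ‖midProd W₀ a b‖ ≤ κ * s ^ (b + 1 - a))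
    {a b : ℕ} (ha : 1 < a) (hab : a ≤ b + 1) (hb : b < L) :
    ‖midProd W₀ a b‖ ≤ κ * s ^ (b + 1 - a) := by
  rcases hab.eq_or_lt with rfl | hlt
  · rw [midProd_of_lt _ (Nat.lt_succ_self b), Nat.sub_self, pow_zero, mul_one]
    exact l2_opNorm_one_le.trans hκ
  · exact hW₀ a b ha (Nat.le_of_lt_succ hlt) hb

lemma norm_add_mul_midProd_add_sub_le_of_tail (hκ : 1 ≤ κ) (hs : 0 ≤ s) (hR : 0 ≤ R)
    (hW₀ : ∀ a b : ℕ, 1 < a → a ≤ b → b < L → ‖midProd W₀ a b‖ ≤ κ * s ^ (b + 1 - a))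
    (hΔT : ‖ΔT‖ ≤ R) (hΔ : ∀ k, 2 ≤ k → k ≤ L - 1 → ‖Δ k‖ ≤ R) (hsR : 25 * κ * L * R ≤ s)
    {i : ℕ} (hi : 1 < i) (hiL : i ≤ L)
    (htail : ∀ j ∈ Finset.Ico i L,
      ‖(T₀ + ΔT) * midProd (fun k => W₀ k + Δ k) (j + 1) (L - 1)‖ ≤ 1.25 * s ^ (L - j)) :
    ‖(T₀ + ΔT) * midProd (fun k => W₀ k + Δ k) i (L - 1) - T₀ * midProd W₀ i (L - 1)‖ ≤
      0.05 * s ^ (L + 1 - i) := by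
  have hhead : ‖ΔT * midProd W₀ i (L - 1)‖ ≤ κ * R * s ^ (L - i) := by
    have hP := norm_midProd_le_of_le_succ hκ hW₀ hi (show i ≤ L - 1 + 1 by omega) (by omega)
    rw [show L - 1 + 1 - i = L - i by omega] at hP
    calc _ ≤ ‖ΔT‖ * ‖midProd W₀ i (L - 1)‖ := Matrix.l2_opNorm_mul _ _
      _ ≤ R * (κ * s ^ (L - i)) := by gcongr
      _ = κ * R * s ^ (L - i) := by ring
  have hterm : ∀ j ∈ Finset.Ico i L, ‖(T₀ + ΔT) * midProd (fun k => W₀ k + Δ k) (j + 1) (L - 1) *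
      Δ j * midProd W₀ i (j - 1)‖ ≤ 1.25 * κ * R * s ^ (L - i) := by
    intro j hj
    have hj' := Finset.mem_Ico.mp hj
    have hP := norm_midProd_le_of_le_succ hκ hW₀ hi (show i ≤ j - 1 + 1 by omega) (by omega)
    rw [show j - 1 + 1 - i = j - i by omega] at hP
    calc _ ≤ ‖(T₀ + ΔT) * midProd (fun k => W₀ k + Δ k) (j + 1) (L - 1)‖ * ‖Δ j‖ *
          ‖midProd W₀ i (j - 1)‖ :=
        (Matrix.l2_opNorm_mul _ _).trans
          (mul_le_mul_of_nonneg_right (Matrix.l2_opNorm_mul _ _) (norm_nonneg _))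
      _ ≤ 1.25 * s ^ (L - j) * R * (κ * s ^ (j - i)) := by
        gcongr
        exacts [htail j hj, hΔ j (by omega) (by omega)]
      _ = 1.25 * κ * R * s ^ (L - j + (j - i)) := by ring
      _ = 1.25 * κ * R * s ^ (L - i) := by rw [show L - j + (j - i) = L - i by omega]
  have hP : 0 ≤ κ * R * s ^ (L - i) := by positivity
  have hiR : (2 : ℝ) ≤ i := by exact_mod_cast hi
  rw [add_mul_midProd_add_sub hi.le hiL]
  calc _ ≤ κ * R * s ^ (L - i) + (L - i : ℕ) * (1.25 * κ * R * s ^ (L - i)) := by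
        refine (norm_add_le _ _).trans (add_le_add hhead ((norm_sum_le _ _).trans ?_))
        simpa using Finset.sum_le_sum hterm
    _ ≤ 1.25 * κ * L * R * s ^ (L - i) := by
        rw [Nat.cast_sub hiL]
        nlinarith
    _ ≤ 0.05 * s * s ^ (L - i) := mul_le_mul_of_nonneg_right (by linarith) (pow_nonneg hs _)
    _ = 0.05 * s ^ (L + 1 - i) := by rw [show L + 1 - i = L - i + 1 by omega, pow_succ]; ring

theorem norm_add_mul_midProd_add_sub_le (hκ : 1 ≤ κ) (hs : 0 ≤ s) (hR : 0 ≤ R)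
    (hW₀ : ∀ a b : ℕ, 1 < a → a ≤ b → b < L → ‖midProd W₀ a b‖ ≤ κ * s ^ (b + 1 - a))
    (hT₀ : ∀ a : ℕ, 1 < a → a ≤ L → ‖T₀ * midProd W₀ a (L - 1)‖ ≤ 1.2 * s ^ (L + 1 - a))
    (hΔT : ‖ΔT‖ ≤ R) (hΔ : ∀ k, 2 ≤ k → k ≤ L - 1 → ‖Δ k‖ ≤ R) (hsR : 25 * κ * L * R ≤ s)
    {i : ℕ} (hi : 1 < i) (hiL : i ≤ L) :
    ‖(T₀ + ΔT) * midProd (fun k => W₀ k + Δ k) i (L - 1) - T₀ * midProd W₀ i (L - 1)‖ ≤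
      0.05 * s ^ (L + 1 - i) := by
  induction h : L - i using Nat.strong_induction_on generalizing i with
  | _ n ih =>
    refine norm_add_mul_midProd_add_sub_le_of_tail hκ hs hR hW₀ hΔT hΔ hsR hi hiL fun j hj => ?_
    have hj' := Finset.mem_Ico.mp hj
    have hdiff := ih (L - (j + 1)) (by omega) (by omega) (by omega) rfl
    have hT := hT₀ (j + 1) (by omega) (by omega)
    rw [show L + 1 - (j + 1) = L - j by omega] at hdiff hT
    calc _ = ‖((T₀ + ΔT) * midProd (fun k => W₀ k + Δ k) (j + 1) (L - 1) -
            T₀ * midProd W₀ (j + 1) (L - 1)) + T₀ * midProd W₀ (j + 1) (L - 1)‖ := by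
          rw [sub_add_cancel]
      _ ≤ 0.05 * s ^ (L - j) + 1.2 * s ^ (L - j) :=
          (norm_add_le _ _).trans (add_le_add hdiff hT)
      _ = 1.25 * s ^ (L - j) := by ring

end Perturbation

/-- perturbation bound for the top-layer partial products `W_{L:i}`. -/
theorem perturbation_top_products :
    ∀ K : ℝ, 1 ≤ K → ∃ C > (0 : ℝ),
      ∀ (L m din dout : ℕ), 2 ≤ L → 1 ≤ m → 1 ≤ din → 1 ≤ dout → dout ≤ m →
      ∀ (W10 : Matrix (Fin m) (Fin din) ℝ) (Wmid0 : ℕ → Matrix (Fin m) (Fin m) ℝ)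
        (WL0 : Matrix (Fin dout) (Fin m) ℝ),
      (∀ a b : ℕ, 1 < a → a ≤ b → b < L →
        smax (midProd Wmid0 a b) ≤ K * Real.sqrt L * (m : ℝ) ^ (((b : ℝ) - a + 1) / 2)) →
      (∀ a : ℕ, 1 < a → a ≤ L →
        smax (WL0 * midProd Wmid0 a (L - 1)) ≤ 1.2 * (m : ℝ) ^ (((L : ℝ) - a + 1) / 2)) →
      ∀ R : ℝ, 0 < R →
      ∀ (Δ1 : Matrix (Fin m) (Fin din) ℝ) (Δmid : ℕ → Matrix (Fin m) (Fin m) ℝ)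
        (ΔL : Matrix (Fin dout) (Fin m) ℝ),
      frob Δ1 ≤ R → (∀ k, 2 ≤ k → k ≤ L - 1 → frob (Δmid k) ≤ R) → frob ΔL ≤ R →
      (m : ℝ) ≥ C * L ^ 3 * R ^ 2 →
      ∀ i : ℕ, 1 < i → i ≤ L →
        smax ((WL0 + ΔL) * midProd (fun k => Wmid0 k + Δmid k) i (L - 1) -
            WL0 * midProd Wmid0 i (L - 1)) ≤
          0.05 * (m : ℝ) ^ (((L : ℝ) - i + 1) / 2) := by
  intro K hK
  refine ⟨625 * K ^ 2, by positivity, ?_⟩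
  intro L m _ _ hL _ _ _ _ _ Wmid0 WL0 hW hWL R hR _ Δmid ΔL _ hΔmid hΔL hm i hi hiL
  have hm₀ : (0 : ℝ) ≤ m := m.cast_nonneg
  have hL₁ : (1 : ℝ) ≤ L := by exact_mod_cast hL.trans' one_le_two
  have hκ : 1 ≤ K * √L := one_le_mul_of_one_le_of_one_le hK (Real.one_le_sqrt.mpr hL₁)
  have hsR : 25 * (K * √L) * L * R ≤ √m := by
    rw [Real.le_sqrt (by positivity) hm₀]
    calc (25 * (K * √L) * L * R) ^ 2 = 625 * K ^ 2 * L ^ 2 * √L ^ 2 * R ^ 2 := by ring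
      _ = 625 * K ^ 2 * L ^ 3 * R ^ 2 := by rw [Real.sq_sqrt (Nat.cast_nonneg L)]; ring
      _ ≤ m := hm
  simp only [smax_eq_l2_opNorm] at hW hWL ⊢
  rw [rpow_sub_add_one_div_two_eq_sqrt_pow hm₀ (by omega)]
  refine norm_add_mul_midProd_add_sub_le hκ (Real.sqrt_nonneg _) hR.le (fun a b ha hab hb => ?_)
    (fun a ha haL => ?_) ((l2_opNorm_le_frob ΔL).trans hΔL)
    (fun k hk hkL => (l2_opNorm_le_frob _).trans (hΔmid k hk hkL)) hsR hi hiL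
  · rw [← rpow_sub_add_one_div_two_eq_sqrt_pow hm₀ (by omega)]
    exact hW a b ha hab hb
  · rw [← rpow_sub_add_one_div_two_eq_sqrt_pow hm₀ (by omega)]
    exact hWL a ha haL
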